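/- arXiv:2311.08188 — 6 statements merged into one kernel-verified Lean document; each statement's English description precedes it below -/
import Mathlib

section
/- Let N be a natural number and let L ≥ 1 be a natural number. Set m = ⌈(log₂ L + 1)/2⌉ (the ceiling of the real number (log₂ L + 1)/2). For every finset F ⊆ Fin N with even cardinality and |F| ≥ 2m, the number of finsets G ⊆ Fin N of even cardinality that are dominated by F is at least L. (Theorem 1, case γ = 0: any even flipping combination of size at least 2m has at least L certainly-no-less-reliable even competitors, so it is redundant for list size L.) -/
/-- `G` is dominated by `F`: for every monotone nondecreasing nonnegative weight
function `w`, the total weight of `G` is at most that of `F`. -/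
def Dominated {N : ℕ} (G F : Finset (Fin N)) : Prop :=
  ∀ w : Fin N → ℝ, Monotone w → (∀ i, 0 ≤ w i) →
    ∑ i ∈ G, w i ≤ ∑ i ∈ F, w i

lemma dominated_of_subset {N : ℕ} {G F : Finset (Fin N)} (h : G ⊆ F) : Dominated G F := by
  intro w _ hw
  exact Finset.sum_le_sum_of_subset_of_nonneg h (fun i _ _ => hw i)

/-- Theorem 1, case γ = 0: with `m = ⌈(log₂ L + 1)/2⌉`, any even-cardinality flipping
combination `F` with `|F| ≥ 2m` has at least `L` even-cardinality dominated competitors. -/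
theorem spc_even_flip_redundant (N L : ℕ) (hL : 1 ≤ L)
    (m : ℕ) (hm : m = ⌈(Real.logb 2 (L : ℝ) + 1) / 2⌉₊)
    (F : Finset (Fin N)) (hFeven : Even F.card) (hFcard : 2 * m ≤ F.card) :
    L ≤ {G : Finset (Fin N) | Even G.card ∧ Dominated G F}.ncard := by
  have hL1 : (1 : ℝ) ≤ (L : ℝ) := by exact_mod_cast hL
  have hlog0 : 0 ≤ Real.logb 2 (L : ℝ) := Real.logb_nonneg (by norm_num) hL1
  -- m ≥ 1
  have hm1 : 1 ≤ m := by
    rw [hm]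
    exact Nat.one_le_ceil_iff.mpr (by linarith)
  -- numeric: L ≤ 2^(2m-1)
  have hceil : (Real.logb 2 (L : ℝ) + 1) / 2 ≤ (m : ℝ) := hm ▸ Nat.le_ceil _
  have hnum : L ≤ 2 ^ (2 * m - 1) := by
    have hexp : Real.logb 2 (L : ℝ) ≤ ((2 * m - 1 : ℕ) : ℝ) := by
      have : ((2 * m - 1 : ℕ) : ℝ) = 2 * (m : ℝ) - 1 := by
        push_cast [Nat.cast_sub (by omega : 1 ≤ 2 * m)]; ring
      rw [this]; linarith
    have h1 : (L : ℝ) = (2 : ℝ) ^ Real.logb 2 (L : ℝ) :=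
      (Real.rpow_logb (by norm_num) (by norm_num) (by linarith)).symm
    have h2 : (2 : ℝ) ^ Real.logb 2 (L : ℝ) ≤ (2 : ℝ) ^ ((2 * m - 1 : ℕ) : ℝ) :=
      Real.rpow_le_rpow_of_exponent_le (by norm_num) hexp
    have h3 : (2 : ℝ) ^ ((2 * m - 1 : ℕ) : ℝ) = ((2 ^ (2 * m - 1) : ℕ) : ℝ) := by
      rw [Real.rpow_natCast]; push_cast; ring
    have : (L : ℝ) ≤ ((2 ^ (2 * m - 1) : ℕ) : ℝ) := by rw [h1]; rw [h3] at h2; exact h2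
    exact_mod_cast this
  -- pick a ∈ F
  have hFpos : 0 < F.card := by omega
  obtain ⟨a, ha⟩ := Finset.card_pos.mp hFpos
  -- injection
  set f : Finset (Fin N) → Finset (Fin N) := fun T => if Even T.card then T else insert a T
    with hf
  have hfsub : ∀ T ∈ (F.erase a).powerset, f T ⊆ F := by
    intro T hT
    rw [Finset.mem_powerset] at hT
    by_cases h : Even T.card
    · simp only [hf, if_pos h]
      exact hT.trans (Finset.erase_subset a F)
    · simp only [hf, if_neg h]
      exact Finset.insert_subset ha (hT.trans (Finset.erase_subset a F))
  have hfeven : ∀ T ∈ (F.erase a).powerset, Even (f T).card := by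
    intro T hT
    rw [Finset.mem_powerset] at hT
    by_cases h : Even T.card
    · simp only [hf, if_pos h]; exact h
    · have haT : a ∉ T := fun hmem => (Finset.mem_erase.mp (hT hmem)).1 rfl
      simp only [hf, if_neg h, Finset.card_insert_of_notMem haT]
      exact Odd.add_one (Nat.not_even_iff_odd.mp h)
  have hfinj : Set.InjOn f (F.erase a).powerset := by
    intro T1 h1 T2 h2 heq
    rw [Finset.coe_powerset, Set.mem_preimage, Set.mem_powerset_iff,
      Finset.coe_subset] at h1 h2
    have ha1 : a ∉ T1 := fun hmem => (Finset.mem_erase.mp (h1 hmem)).1 rfl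
    have ha2 : a ∉ T2 := fun hmem => (Finset.mem_erase.mp (h2 hmem)).1 rfl
    by_cases e1 : Even T1.card <;> by_cases e2 : Even T2.card
    · simpa [hf, e1, e2] using heq
    · simp only [hf, if_pos e1, if_neg e2] at heq
      exact absurd (heq ▸ Finset.mem_insert_self a T2) ha1
    · simp only [hf, if_neg e1, if_pos e2] at heq
      exact absurd (heq ▸ Finset.mem_insert_self a T1) ha2
    · simp only [hf, if_neg e1, if_neg e2] at heq
      have := congrArg (Finset.erase · a) heq
      simpa [Finset.erase_insert ha1, Finset.erase_insert ha2] using this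
  set S : Set (Finset (Fin N)) := {G : Finset (Fin N) | Even G.card ∧ Dominated G F}
  have himg : ↑(((F.erase a).powerset).image f) ⊆ S := by
    intro G hG
    simp only [Finset.coe_image, Set.mem_image, Finset.mem_coe] at hG
    obtain ⟨T, hT, rfl⟩ := hG
    exact ⟨hfeven T hT, dominated_of_subset (hfsub T hT)⟩
  have hcard : (((F.erase a).powerset).image f).card = 2 ^ (F.card - 1) := by
    rw [Finset.card_image_of_injOn hfinj, Finset.card_powerset,
      Finset.card_erase_of_mem ha]
  have hle : 2 ^ (2 * m - 1) ≤ 2 ^ (F.card - 1) :=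
    Nat.pow_le_pow_right (by norm_num) (by omega)
  calc L ≤ 2 ^ (2 * m - 1) := hnum
    _ ≤ 2 ^ (F.card - 1) := hle
    _ = (((F.erase a).powerset).image f).card := hcard.symm
    _ = (↑(((F.erase a).powerset).image f) : Set (Finset (Fin N))).ncard :=
        (Set.ncard_coe_finset _).symm
    _ ≤ S.ncard := Set.ncard_le_ncard himg (Set.toFinite S)
end

section
/- Let N be a natural number and let L ≥ 1 be a natural number. Set m = ⌈(log₂ L)/2⌉ (the ceiling of the real number (log₂ L)/2). For every finset F ⊆ Fin N with odd cardinality and |F| ≥ 2m + 1, the number of finsets G ⊆ Fin N of odd cardinality that are dominated by F is at least L. (Theorem 1, case γ = 1: any odd flipping combination of size at least 2m+1 has at least L certainly-no-less-reliable odd competitors, so it is redundant for list size L.) -/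
/-- Theorem 1, case γ = 1: with `m = ⌈(log₂ L)/2⌉`, any odd-cardinality flipping
combination `F` with `|F| ≥ 2m + 1` has at least `L` odd-cardinality dominated competitors. -/
theorem spc_odd_flip_redundant (N L : ℕ) (hL : 1 ≤ L)
    (m : ℕ) (hm : m = ⌈Real.logb 2 (L : ℝ) / 2⌉₊)
    (F : Finset (Fin N)) (hFodd : Odd F.card) (hFcard : 2 * m + 1 ≤ F.card) :
    L ≤ {G : Finset (Fin N) | Odd G.card ∧ Dominated G F}.ncard := by
  -- F is nonempty
  obtain ⟨a, ha⟩ : F.Nonempty := Finset.card_pos.mp (by omega)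
  -- choose E ⊆ F.erase a with |E| = 2m
  obtain ⟨E, hE, hEcard⟩ := Finset.exists_subset_card_eq
    (show 2 * m ≤ (F.erase a).card by rw [Finset.card_erase_of_mem ha]; omega)
  have haE : a ∉ E := fun h => (Finset.notMem_erase a F) (hE h)
  -- the injection
  set φ : Finset (Fin N) → Finset (Fin N) :=
    fun T => if Odd T.card then T else insert a T with hφ
  have hinj : Set.InjOn φ ↑E.powerset := by
    intro T hT T' hT' h
    simp only [Finset.coe_powerset, Set.mem_preimage, Set.mem_powerset_iff,
      Finset.coe_subset] at hT hT'
    have haT : a ∉ T := fun h => haE (hT h)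
    have haT' : a ∉ T' := fun h => haE (hT' h)
    by_cases h1 : Odd T.card <;> by_cases h2 : Odd T'.card <;>
      simp only [hφ, h1, h2, if_pos, if_neg, if_true, if_false] at h
    · exact h
    · exact absurd (h ▸ Finset.mem_insert_self a T') (h ▸ haT)
    · exact absurd (h ▸ Finset.mem_insert_self a T) (fun _ => haT' (h ▸ Finset.mem_insert_self a T))
    · have := congrArg (fun s => Finset.erase s a) h
      simpa [Finset.erase_insert haT, Finset.erase_insert haT'] using this
  set S : Finset (Finset (Fin N)) := E.powerset.image φ with hS
  have hScard : S.card = 2 ^ (2 * m) := by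
    rw [hS, Finset.card_image_of_injOn hinj, Finset.card_powerset, hEcard]
  have hsub : ↑S ⊆ {G : Finset (Fin N) | Odd G.card ∧ Dominated G F} := by
    intro G hG
    simp only [hS, Finset.coe_image, Set.mem_image, Finset.mem_coe,
      Finset.mem_powerset] at hG
    obtain ⟨T, hT, rfl⟩ := hG
    have hTF : T ⊆ F := hT.trans (hE.trans (Finset.erase_subset a F))
    by_cases h1 : Odd T.card
    · simp only [hφ, if_pos h1]
      exact ⟨h1, dominated_of_subset hTF⟩
    · simp only [hφ, if_neg h1]
      have haT : a ∉ T := fun h => haE (hT h)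
      constructor
      · rw [Finset.card_insert_of_notMem haT]
        rw [Nat.odd_add_one]; exact h1
      · exact dominated_of_subset (Finset.insert_subset ha hTF)
  -- arithmetic: L ≤ 2^(2m)
  have hL2 : L ≤ 2 ^ (2 * m) := by
    have h1 : Real.logb 2 (L : ℝ) / 2 ≤ (m : ℝ) := hm ▸ Nat.le_ceil _
    have h2 : Real.logb 2 (L : ℝ) ≤ (2 * m : ℕ) := by
      push_cast; linarith
    have h3 : (L : ℝ) ≤ 2 ^ (2 * m : ℕ) := by
      calc (L : ℝ) = (2 : ℝ) ^ Real.logb 2 (L : ℝ) :=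
            (Real.rpow_logb (by norm_num) (by norm_num)
              (by exact_mod_cast Nat.lt_of_lt_of_le Nat.zero_lt_one hL)).symm
        _ ≤ (2 : ℝ) ^ ((2 * m : ℕ) : ℝ) :=
            Real.rpow_le_rpow_of_exponent_le (by norm_num) h2
        _ = 2 ^ (2 * m : ℕ) := by rw [Real.rpow_natCast]
    exact_mod_cast h3
  calc L ≤ 2 ^ (2 * m) := hL2
    _ = S.card := hScard.symm
    _ = (↑S : Set (Finset (Fin N))).ncard := (Set.ncard_coe_finset S).symm
    _ ≤ _ := Set.ncard_le_ncard hsub (Set.toFinite _)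
end

section
/- Let N ≥ 1 and L ≥ 1 be natural numbers, and let num_even and num_odd denote the dominance counts defined below. For every finset F ⊆ Fin N of even cardinality with num_even(F) < L, the finset F' = F △ {0} (the symmetric difference of F with the singleton containing the least-reliable index 0) has odd cardinality and satisfies num_odd(F') < L. (Theorem 2: if F belongs to the minimum-combinations set for γ = 0 and list size L, then F △ {0} belongs to the minimum-combinations set for γ = 1 and list size L.) -/
lemma symmDiff_singleton_mem {α : Type*} [DecidableEq α] {s : Finset α} {z : α}
    (h : z ∈ s) : symmDiff s {z} = s.erase z := by
  ext x
  simp only [Finset.mem_symmDiff, Finset.mem_singleton, Finset.mem_erase]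
  constructor
  · rintro (⟨hx, hne⟩ | ⟨rfl, hns⟩)
    · exact ⟨hne, hx⟩
    · exact absurd h hns
  · rintro ⟨hne, hx⟩; exact Or.inl ⟨hx, hne⟩

lemma symmDiff_singleton_not_mem {α : Type*} [DecidableEq α] {s : Finset α} {z : α}
    (h : z ∉ s) : symmDiff s {z} = insert z s := by
  ext x
  simp only [Finset.mem_symmDiff, Finset.mem_singleton, Finset.mem_insert]
  constructor
  · rintro (⟨hx, _⟩ | ⟨rfl, _⟩)
    · exact Or.inr hx
    · exact Or.inl rfl
  · rintro (rfl | hx)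
    · exact Or.inr ⟨rfl, h⟩
    · exact Or.inl ⟨hx, fun he => h (he ▸ hx)⟩

lemma key {N : ℕ} (z : Fin N) (hz : ∀ i, z ≤ i) (F G : Finset (Fin N))
    (hFeven : Even F.card) (hGodd : Odd G.card)
    (hdom : Dominated G (symmDiff F {z})) :
    Even (symmDiff G {z}).card ∧ Dominated (symmDiff G {z}) F := by
  constructor
  · by_cases hzG : z ∈ G
    · rw [symmDiff_singleton_mem hzG, Finset.card_erase_of_mem hzG]
      exact Nat.Odd.sub_odd hGodd odd_one
    · rw [symmDiff_singleton_not_mem hzG, Finset.card_insert_of_notMem hzG]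
      exact Odd.add_one hGodd
  · intro w hmono hnn
    by_cases hzF : z ∈ F
    · rw [symmDiff_singleton_mem hzF] at hdom
      have hF' : ∑ i ∈ F.erase z, w i ≤ ∑ i ∈ F, w i := by
        have := Finset.sum_erase_add F w hzF
        have := hnn z
        linarith
      by_cases hzG : z ∈ G
      · rw [symmDiff_singleton_mem hzG]
        have h1 : ∑ i ∈ G.erase z, w i ≤ ∑ i ∈ G, w i := by
          have := Finset.sum_erase_add G w hzG
          have := hnn z
          linarith
        calc ∑ i ∈ G.erase z, w i ≤ ∑ i ∈ G, w i := h1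
          _ ≤ ∑ i ∈ F.erase z, w i := hdom w hmono hnn
          _ ≤ ∑ i ∈ F, w i := hF'
      · rw [symmDiff_singleton_not_mem hzG, Finset.sum_insert hzG]
        have h1 := hdom w hmono hnn
        have h2 := Finset.sum_erase_add F w hzF
        linarith
    · rw [symmDiff_singleton_not_mem hzF] at hdom
      by_cases hzG : z ∈ G
      · rw [symmDiff_singleton_mem hzG]
        have h1 := hdom w hmono hnn
        have h2 := Finset.sum_insert hzF (f := w)
        have h3 := Finset.sum_erase_add G w hzG
        linarith
      · rw [symmDiff_singleton_not_mem hzG, Finset.sum_insert hzG]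
        -- card bound : G.card + 1 ≤ F.card
        have hcard : G.card + 1 ≤ F.card := by
          have hw1 : Monotone (fun i : Fin N => if i = z then (0:ℝ) else 1) := by
            intro i j hij
            by_cases hi : i = z
            · simp [hi]; split <;> norm_num
            · have hj : j ≠ z := by
                rintro rfl
                exact hi (le_antisymm hij (hz i))
              simp [hi, hj]
          have hw2 : ∀ i : Fin N, (0:ℝ) ≤ if i = z then 0 else 1 := by
            intro i; split <;> norm_num
          have h := hdom _ hw1 hw2
          rw [Finset.sum_insert hzF] at h
          have hG : ∑ i ∈ G, (if i = z then (0:ℝ) else 1) = G.card := by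
            rw [Finset.sum_congr rfl
              (fun i hi => if_neg (fun he => hzG (by rw [he] at hi; exact hi)))]
            simp
          have hFc : ∑ i ∈ F, (if i = z then (0:ℝ) else 1) = F.card := by
            rw [Finset.sum_congr rfl
              (fun i hi => if_neg (fun he => hzF (by rw [he] at hi; exact hi)))]
            simp
          rw [hG, hFc, if_pos rfl] at h
          have hle : G.card ≤ F.card := by exact_mod_cast (by linarith : (G.card:ℝ) ≤ F.card)
          rcases lt_or_eq_of_le hle with h' | h'
          · omega
          · exfalso
            rw [h'] at hGodd
            exact (Nat.not_odd_iff_even.mpr hFeven) hGodd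
        -- shifted weights
        have hmono' : Monotone (fun i => w i - w z) := fun i j hij => by
          simp only [sub_le_sub_iff_right]; exact hmono hij
        have hnn' : ∀ i, (0:ℝ) ≤ w i - w z := fun i => by
          have := hmono (hz i); linarith
        have h := hdom _ hmono' hnn'
        rw [Finset.sum_insert hzF] at h
        simp only [Finset.sum_sub_distrib, Finset.sum_const, nsmul_eq_mul] at h
        have hwz : 0 ≤ w z := hnn z
        have hc : (G.card : ℝ) + 1 ≤ F.card := by exact_mod_cast hcard
        nlinarith [h, hwz, hc]

/-- Theorem 2: if the even-cardinality combination `F` is in the MCS for γ = 0 and list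
size `L` (i.e. `num_even F < L`), then `F' = F △ {0}` has odd cardinality and lies in the
MCS for γ = 1 (i.e. `num_odd F' < L`), where `0` is the least-reliable index. -/
theorem mcs_even_to_odd (N L : ℕ) (hN : 1 ≤ N) (hL : 1 ≤ L)
    (F : Finset (Fin N)) (hFeven : Even F.card)
    (hF : {G : Finset (Fin N) | Even G.card ∧ Dominated G F}.ncard < L) :
    Odd (symmDiff F {(⟨0, hN⟩ : Fin N)}).card ∧
      {G : Finset (Fin N) |
        Odd G.card ∧ Dominated G (symmDiff F {(⟨0, hN⟩ : Fin N)})}.ncard < L := by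
  set z : Fin N := ⟨0, hN⟩ with hzdef
  have hz : ∀ i : Fin N, z ≤ i := fun i => by simp [hzdef, Fin.le_def]
  constructor
  · by_cases hzF : z ∈ F
    · rw [symmDiff_singleton_mem hzF, Finset.card_erase_of_mem hzF]
      have : 1 ≤ F.card := Finset.card_pos.mpr ⟨z, hzF⟩
      rcases hFeven with ⟨k, hk⟩
      refine ⟨k - 1, by omega⟩
    · rw [symmDiff_singleton_not_mem hzF, Finset.card_insert_of_notMem hzF]
      exact Even.add_one hFeven
  · refine lt_of_le_of_lt ?_ hF
    apply Set.ncard_le_ncard_of_injOn (fun G => symmDiff G {z})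
    · rintro G ⟨hGodd, hGdom⟩
      rcases key z hz F G hFeven hGodd hGdom with ⟨h1, h2⟩
      exact ⟨h1, h2⟩
    · intro a _ b _ h
      have := congrArg (fun s => symmDiff s ({z} : Finset (Fin N))) h
      simpa [symmDiff_symmDiff_cancel_right] using this
end

section
/- Let K ≥ 1 and J ≥ 1 be natural numbers and let α : Fin K → Fin J → ℝ satisfy α k j ≠ 0 for all k, j. For each k let M k = min_{j} |α k j|, let s k = ∏_{j} sign(α k j) ∈ {−1, +1}, and define the source-node LLR α_q k = s k · M k. Let b : Fin K → {0, 1} ⊆ ℝ be arbitrary (the source-node codeword bits), and for each k let γ k ∈ {0, 1} ⊆ ℝ be 0 if (∑_{j} HD(α k j) : ZMod 2) equals (b k : ZMod 2) and 1 otherwise. Then ∑_{k} ∑_{j} ln(1 + e^{−|α k j|}) + ∑_{k} γ k · M k = (∑_{k} ∑_{j} ln(1 + e^{−|α k j|}) − ∑_{k} ln(1 + e^{−M k})) + ∑_{k} ln(1 + e^{−(1 − 2·b k)·(α_q k)}). Equivalently, the root-level path metric PM_p after Wagner decoding of each SPC subcode equals the sum over all non-minimal positions of ln(1 + e^{−|α_p[i]|})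 plus the source-level path metric PM_q. (Theorem 3.) -/
/-- Hard decision of a (nonzero) real LLR, as an element of `ZMod 2`:
`0` if the LLR is positive, `1` otherwise. -/
noncomputable def HD (x : ℝ) : ZMod 2 := if 0 < x then 0 else 1

lemma zmod2_cases (v : ZMod 2) : v = 0 ∨ v = 1 := by revert v; decide

lemma sign_prod_eq {ι : Type*} [DecidableEq ι] (s : Finset ι) (f : ι → ℝ)
    (hf : ∀ j ∈ s, f j ≠ 0) :
    ∏ j ∈ s, Real.sign (f j) = if (∑ j ∈ s, HD (f j)) = 0 then 1 else -1 := by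
  induction s using Finset.induction_on with
  | empty => simp
  | @insert a t ha ih =>
    rw [Finset.prod_insert ha, Finset.sum_insert ha,
      ih (fun j hj => hf j (Finset.mem_insert_of_mem hj))]
    rcases lt_or_gt_of_ne (hf a (Finset.mem_insert_self a t)) with h | h
    · rw [Real.sign_of_neg h]
      have hHD : HD (f a) = 1 := by simp [HD, not_lt_of_gt h]
      rw [hHD]
      rcases zmod2_cases (∑ j ∈ t, HD (f j)) with hv | hv <;> simp [hv, show (1+1:ZMod 2)=0 from rfl]
    · rw [Real.sign_of_pos h]
      have hHD : HD (f a) = 0 := by simp [HD, h]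
      rw [hHD]
      simp

lemma log_one_add_exp (x : ℝ) :
    Real.log (1 + Real.exp x) = x + Real.log (1 + Real.exp (-x)) := by
  have h : 1 + Real.exp x = Real.exp x * (1 + Real.exp (-x)) := by
    rw [mul_add, mul_one, ← Real.exp_add, add_neg_cancel, Real.exp_zero, add_comm]
  rw [h, Real.log_mul (Real.exp_ne_zero x) (by positivity), Real.log_exp]

/-- Theorem 3: the root-level path metric after Wagner decoding of each SPC subcode
equals the baseline metric over the non-minimal positions plus the exact source-level
path metric computed with the combined LLRs `αq k = (∏ⱼ sign (α k j)) · minⱼ |α k j|`. -/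
theorem pm_root_eq_pm_source (K J : ℕ) (hK : 1 ≤ K) (hJ : 1 ≤ J)
    (α : Fin K → Fin J → ℝ) (hα : ∀ k j, α k j ≠ 0)
    (M : Fin K → ℝ)
    (hM : ∀ k, M k = Finset.univ.inf' ⟨⟨0, hJ⟩, Finset.mem_univ _⟩ fun j => |α k j|)
    (αq : Fin K → ℝ)
    (hαq : ∀ k, αq k = (∏ j, Real.sign (α k j)) * M k)
    (b : Fin K → ℝ) (hb : ∀ k, b k = 0 ∨ b k = 1)
    (γ : Fin K → ℝ)
    (hγ : ∀ k, γ k =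
      if (∑ j, HD (α k j)) = (if b k = 1 then (1 : ZMod 2) else 0) then 0 else 1) :
    ∑ k, ∑ j, Real.log (1 + Real.exp (-|α k j|)) + ∑ k, γ k * M k
      = (∑ k, ∑ j, Real.log (1 + Real.exp (-|α k j|))
          - ∑ k, Real.log (1 + Real.exp (-(M k))))
        + ∑ k, Real.log (1 + Real.exp (-(1 - 2 * b k) * αq k)) := by
  have key : ∀ k, γ k * M k
      = Real.log (1 + Real.exp (-(1 - 2 * b k) * αq k))
        - Real.log (1 + Real.exp (-(M k))) := by
    intro k
    have hs := sign_prod_eq Finset.univ (α k) (fun j _ => hα k j)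
    rcases hb k with hbk | hbk
    · -- b k = 0, so target bit is 0
      rcases zmod2_cases (∑ j, HD (α k j)) with hv | hv
      · -- agreement: γ = 0, sign product = 1
        have hγk : γ k = 0 := by rw [hγ k, hbk]; norm_num [hv]
        have hsk : (∏ j, Real.sign (α k j)) = 1 := by rw [hs]; simp [hv]
        rw [hγk, hαq k, hsk, hbk]
        ring_nf
      · -- disagreement: γ = 1, sign product = -1
        have hγk : γ k = 1 := by rw [hγ k, hbk]; norm_num [hv]
        have hsk : (∏ j, Real.sign (α k j)) = -1 := by rw [hs]; simp [hv]
        rw [hγk, hαq k, hsk, hbk]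
        have : -(1 - 2 * (0:ℝ)) * (-1 * M k) = M k := by ring
        rw [this, log_one_add_exp (M k)]
        ring
    · -- b k = 1, target bit is 1
      rcases zmod2_cases (∑ j, HD (α k j)) with hv | hv
      · have hγk : γ k = 1 := by rw [hγ k, hbk]; norm_num [hv]
        have hsk : (∏ j, Real.sign (α k j)) = 1 := by rw [hs]; simp [hv]
        rw [hγk, hαq k, hsk, hbk]
        have : -(1 - 2 * (1:ℝ)) * (1 * M k) = M k := by ring
        rw [this, log_one_add_exp (M k)]
        ring
      · have hγk : γ k = 0 := by rw [hγ k, hbk]; norm_num [hv]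
        have hsk : (∏ j, Real.sign (α k j)) = -1 := by rw [hs]; simp [hv]
        rw [hγk, hαq k, hsk, hbk]
        have : -(1 - 2 * (1:ℝ)) * (-1 * M k) = -(M k) := by ring
        rw [this]
        ring
  have h1 : ∑ k, γ k * M k
      = ∑ k, Real.log (1 + Real.exp (-(1 - 2 * b k) * αq k))
        - ∑ k, Real.log (1 + Real.exp (-(M k))) := by
    rw [← Finset.sum_sub_distrib]
    exact Finset.sum_congr rfl fun k _ => key k
  rw [h1]; ring
end

section
/- Let K be a natural number, a : Fin K → ℝ with a k ≠ 0 for all k, and β : Fin K → {0, 1} ⊆ ℝ. Then ∑_{k : β k ≠ HD(a k)} |a k| = ∑_{k} ln(1 + e^{−(1 − 2·β k)·(a k)}) − ∑_{k} ln(1 + e^{−|a k|}), where the left-hand sum runs over those k ∈ Fin K for which β k differs from the hard decision HD(a k). -/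
/-- Hard decision of a (nonzero) real LLR, viewed as a real number in `{0, 1}`:
`0` if the LLR is positive, `1` otherwise. -/
noncomputable def HDr (x : ℝ) : ℝ := if 0 < x then 0 else 1

lemma log_one_add_exp_sub (x : ℝ) :
    Real.log (1 + Real.exp x) - Real.log (1 + Real.exp (-x)) = x := by
  have h : (1 : ℝ) + Real.exp x = Real.exp x * (1 + Real.exp (-x)) := by
    rw [mul_add, mul_one, ← Real.exp_add]
    ring_nf
    rw [Real.exp_zero]; ring
  rw [h, Real.log_mul (Real.exp_ne_zero x) (by positivity), Real.log_exp]
  ring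

/-- Aggregated identity (equations (20)–(21)): the total penalty of the positions where
the bit decisions `β` disagree with the hard decisions equals the exact path metric
minus the all-hard-decision baseline. -/
theorem total_mismatch_penalty (K : ℕ) (a : Fin K → ℝ) (ha : ∀ k, a k ≠ 0)
    (β : Fin K → ℝ) (hβ : ∀ k, β k = 0 ∨ β k = 1) :
    ∑ k ∈ Finset.univ.filter (fun k => β k ≠ HDr (a k)), |a k|
      = ∑ k, Real.log (1 + Real.exp (-(1 - 2 * β k) * a k))
        - ∑ k, Real.log (1 + Real.exp (-|a k|)) := by
  rw [Finset.sum_filter, ← Finset.sum_sub_distrib]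
  apply Finset.sum_congr rfl
  intro k _
  have hak := ha k
  rcases lt_or_gt_of_ne hak with hneg | hpos
  · have hHD : HDr (a k) = 1 := by simp [HDr, not_lt.mpr hneg.le]
    have habs : |a k| = -a k := abs_of_neg hneg
    rcases hβ k with h0 | h1
    · have : β k ≠ HDr (a k) := by rw [h0, hHD]; norm_num
      rw [if_pos this, habs, h0, show -(1 - 2 * 0) * a k = -a k by ring]
      linarith [log_one_add_exp_sub (-a k)]
    · have : ¬ (β k ≠ HDr (a k)) := by rw [h1, hHD]; simp
      rw [if_neg this, habs, h1, show -(1 - 2 * 1) * a k = a k by ring,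
        show -(-a k) = a k by ring]
      ring
  · have hHD : HDr (a k) = 0 := by simp [HDr, hpos]
    have habs : |a k| = a k := abs_of_pos hpos
    rcases hβ k with h0 | h1
    · have : ¬ (β k ≠ HDr (a k)) := by rw [h0, hHD]; simp
      rw [if_neg this, habs, h0, show -(1 - 2 * 0) * a k = -a k by ring]
      ring
    · have : β k ≠ HDr (a k) := by rw [h1, hHD]; norm_num
      rw [if_pos this, habs, h1, show -(1 - 2 * 1) * a k = a k by ring]
      linarith [log_one_add_exp_sub (a k)]
end

section
/- Let N be a natural number, α : Fin N → ℝ with α i ≠ 0 for all i, and F a finset of Fin N. Define β : Fin N → {0, 1} ⊆ ℝ by flipping the hard decisions on F, i.e. β i = 1 − HD(α i) if i ∈ F and β i = HD(α i) otherwise. Then ∑_{i} ln(1 + e^{−(1 − 2·β i)·(α i)}) = ∑_{i} ln(1 + e^{−|α i|}) + ∑_{i∈F} |α i|. -/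
lemma HDr_mul (x : ℝ) (hx : x ≠ 0) : (1 - 2 * HDr x) * x = |x| := by
  unfold HDr
  rcases lt_or_gt_of_ne hx with h | h
  · rw [if_neg (not_lt.2 h.le), abs_of_neg h]; ring
  · rw [if_pos h, abs_of_pos h]; ring

lemma log_shift (y : ℝ) : Real.log (1 + Real.exp y) = Real.log (1 + Real.exp (-y)) + y := by
  have h1 : (1 : ℝ) + Real.exp y = Real.exp y * (1 + Real.exp (-y)) := by
    rw [mul_add, mul_one, ← Real.exp_add]; rw [add_neg_cancel, Real.exp_zero]; ring
  rw [h1, Real.log_mul (Real.exp_ne_zero y)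
    (by positivity), Real.log_exp]
  ring

/-- Equations (13)–(14): the exact path metric of the candidate path obtained by
flipping the hard decisions on the flipping combination `F` equals the baseline metric
plus the flipping penalty `σ_F = ∑_{i∈F} |α i|`. -/
theorem pm_flip_hard_decisions (N : ℕ) (α : Fin N → ℝ) (hα : ∀ i, α i ≠ 0)
    (F : Finset (Fin N)) (β : Fin N → ℝ)
    (hβ : ∀ i, β i = if i ∈ F then 1 - HDr (α i) else HDr (α i)) :
    ∑ i, Real.log (1 + Real.exp (-(1 - 2 * β i) * α i))
      = ∑ i, Real.log (1 + Real.exp (-|α i|)) + ∑ i ∈ F, |α i| := by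
  have key : ∀ i, Real.log (1 + Real.exp (-(1 - 2 * β i) * α i))
      = Real.log (1 + Real.exp (-|α i|)) + (if i ∈ F then |α i| else 0) := by
    intro i
    by_cases h : i ∈ F
    · have : -(1 - 2 * β i) * α i = |α i| := by
        rw [hβ i, if_pos h]
        have := HDr_mul (α i) (hα i)
        nlinarith [this]
      rw [this, if_pos h, log_shift]
    · have : -(1 - 2 * β i) * α i = -|α i| := by
        rw [hβ i, if_neg h]
        have := HDr_mul (α i) (hα i)
        nlinarith [this]
      rw [this, if_neg h, add_zero]
  simp only [key, Finset.sum_add_distrib]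
  congr 1
  simp [Finset.sum_ite_mem]
end
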